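/- arXiv:2407.14569 — 3 statements merged into one kernel-verified Lean document; each statement's English description precedes it below -/
import Mathlib

section
/- An ordered semigroup that is both right π-inverse and left π-t-simple is π-t-simple (i.e., any two elements are H*-related: a L* b and a R* b for all a, b). -/
/-!  Common framework: an ordered semigroup is a semigroup with a partial
order compatible with multiplication on both sides.  `pw a n` denotes the
power `a^(n+1)` (so the index `n : ℕ` ranges over the positive exponents). -/

variable {S : Type*}

/-- `pw a n = a^(n+1)`. -/
def pw [Semigroup S] (a : S) : ℕ → S
  | 0 => a
  | n + 1 => pw a n * a

section Defs
variable [Semigroup S] [PartialOrder S]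

/-- ordered idempotent : `e ≤ e²`. -/
def OrdIdem (e : S) : Prop := e ≤ e * e

/-- `b` is an ordered inverse of `a` : `a ≤ aba` and `b ≤ bab`. -/
def OrdInv (a b : S) : Prop := a ≤ a * b * a ∧ b ≤ b * a * b

/-- regular element : `a ∈ (aSa]`. -/
def Regular (a : S) : Prop := ∃ x : S, a ≤ a * x * a

/-- π-regular : every element has a regular (positive) power. -/
def PiRegular (S : Type*) [Semigroup S] [PartialOrder S] : Prop :=
  ∀ a : S, ∃ m : ℕ, Regular (pw a m)

/-- principal left ideal `(a ∪ Sa]`. -/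
def Lset (a : S) : Set S := {x | x ≤ a ∨ ∃ s : S, x ≤ s * a}

/-- principal right ideal `(a ∪ aS]`. -/
def Rset (a : S) : Set S := {x | x ≤ a ∨ ∃ s : S, x ≤ a * s}

/-- Green's relation `L`. -/
def GreenL (a b : S) : Prop := Lset a = Lset b

/-- Green's relation `R`. -/
def GreenR (a b : S) : Prop := Rset a = Rset b

/-- `m` is the least index (i.e. `m+1` is the least positive exponent) with `a^(m+1)` regular. -/
def LeastReg (a : S) (m : ℕ) : Prop := Regular (pw a m) ∧ ∀ k < m, ¬ Regular (pw a k)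

/-- generalized Green relation `L*`. -/
def GreenLStar (a b : S) : Prop :=
  ∃ m n : ℕ, LeastReg a m ∧ LeastReg b n ∧ GreenL (pw a m) (pw b n)

/-- generalized Green relation `R*`. -/
def GreenRStar (a b : S) : Prop :=
  ∃ m n : ℕ, LeastReg a m ∧ LeastReg b n ∧ GreenR (pw a m) (pw b n)

end Defs

section Aux
variable [Semigroup S] [PartialOrder S] [CovariantClass S S (· * ·) (· ≤ ·)]
    [CovariantClass S S (Function.swap (· * ·)) (· ≤ ·)]

lemma ordIdem_of_reg {a x : S} (h : a ≤ a * x * a) : OrdIdem (a * x) := by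
  show a * x ≤ a * x * (a * x)
  have : a * x ≤ (a * x * a) * x := mul_le_mul_left h x
  simpa [mul_assoc] using this

lemma regular_of_ordIdem {e : S} (he : OrdIdem e) : Regular e := by
  refine ⟨e, le_trans he ?_⟩
  have := mul_le_mul_right he e
  simpa [mul_assoc] using this

lemma greenR_right {a x : S} (h : a ≤ a * x * a) : GreenR a (a * x) := by
  ext y
  constructor
  · rintro (hy | ⟨s, hy⟩)
    · exact Or.inr ⟨a, le_trans hy h⟩
    · refine Or.inr ⟨a * s, ?_⟩
      have := mul_le_mul_left h s
      calc y ≤ a * s := hy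
        _ ≤ a * x * a * s := this
        _ = a * x * (a * s) := by rw [mul_assoc]
  · rintro (hy | ⟨s, hy⟩)
    · exact Or.inr ⟨x, hy⟩
    · exact Or.inr ⟨x * s, by simpa [mul_assoc] using hy⟩

lemma leastReg_zero_of_ordIdem {e : S} (he : OrdIdem e) : LeastReg e 0 :=
  ⟨regular_of_ordIdem he, by omega⟩

end Aux

theorem stmt11 [Semigroup S] [PartialOrder S] [CovariantClass S S (· * ·) (· ≤ ·)]
    [CovariantClass S S (Function.swap (· * ·)) (· ≤ ·)]
    (hpi : PiRegular S)
    (hrinv : ∀ e f : S, OrdIdem e → OrdIdem f → GreenLStar e f → GreenRStar e f)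
    (hlts : ∀ a b : S, GreenLStar a b) :
    ∀ a b : S, GreenLStar a b ∧ GreenRStar a b := by
  intro a b
  refine ⟨hlts a b, ?_⟩
  obtain ⟨m, n, hm, hn, -⟩ := hlts a b
  obtain ⟨x, hx⟩ := hm.1
  obtain ⟨y, hy⟩ := hn.1
  have he : OrdIdem (pw a m * x) := ordIdem_of_reg hx
  have hf : OrdIdem (pw b n * y) := ordIdem_of_reg hy
  obtain ⟨p, q, hp, hq, hR⟩ := hrinv _ _ he hf (hlts _ _)
  have hp0 : p = 0 := by
    by_contra h
    exact hp.2 0 (Nat.pos_of_ne_zero h) (regular_of_ordIdem he)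
  have hq0 : q = 0 := by
    by_contra h
    exact hq.2 0 (Nat.pos_of_ne_zero h) (regular_of_ordIdem hf)
  subst hp0; subst hq0
  refine ⟨m, n, hm, hn, ?_⟩
  have h1 : GreenR (pw a m) (pw a m * x) := greenR_right hx
  have h2 : GreenR (pw b n) (pw b n * y) := greenR_right hy
  unfold GreenR at *
  simp only [pw] at hR
  rw [h1, hR, ← h2]
end

section
/- Let S be a right π-inverse ordered semigroup in which L* ⊆ R*. Then S is right π-regular: for every a ∈ S there exist m ∈ ℕ and t ∈ S with a^m ≤ a^{2m} t. -/
/-!  Common framework: an ordered semigroup is a semigroup with a partial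
order compatible with multiplication on both sides.  `pw a n` denotes the
power `a^(n+1)` (so the index `n : ℕ` ranges over the positive exponents). -/

variable {S : Type*}

section Aux
variable [Semigroup S] [PartialOrder S] [CovariantClass S S (· * ·) (· ≤ ·)]
    [CovariantClass S S (Function.swap (· * ·)) (· ≤ ·)]

lemma pw_add (a : S) (i j : ℕ) : pw a (i + j + 1) = pw a i * pw a j := by
  induction j with
  | zero => rfl
  | succ j ih =>
    show pw a (i + j + 1 + 1) = pw a i * pw a (j + 1)
    rw [show pw a (i + j + 1 + 1) = pw a (i + j + 1) * a from rfl, ih]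
    rw [show pw a (j + 1) = pw a j * a from rfl, mul_assoc]

lemma leastReg_unique {a : S} {m n : ℕ} (hm : LeastReg a m) (hn : LeastReg a n) : m = n := by
  rcases lt_trichotomy m n with h | h | h
  · exact absurd hm.1 (hn.2 m h)
  · exact h
  · exact absurd hn.1 (hm.2 n h)

lemma lset_trans {y p q : S} (h1 : y ∈ Lset p) (h2 : p ∈ Lset q) : y ∈ Lset q := by
  rcases h1 with h1 | ⟨s, h1⟩ <;> rcases h2 with h2 | ⟨u, h2⟩
  · exact Or.inl (h1.trans h2)
  · exact Or.inr ⟨u, h1.trans h2⟩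
  · exact Or.inr ⟨s, h1.trans (mul_le_mul_right h2 s)⟩
  · refine Or.inr ⟨s * u, ?_⟩
    calc y ≤ s * p := h1
    _ ≤ s * (u * q) := mul_le_mul_right h2 s
    _ = s * u * q := (mul_assoc _ _ _).symm

lemma greenL_of_mem {p q : S} (h1 : p ∈ Lset q) (h2 : q ∈ Lset p) : GreenL p q := by
  ext y
  exact ⟨fun hy => lset_trans hy h1, fun hy => lset_trans hy h2⟩

end Aux

/-- Note `pw a m = a^(m+1)` and `pw a (2*m+1) = a^(2(m+1))`. -/
theorem stmt13 [Semigroup S] [PartialOrder S] [CovariantClass S S (· * ·) (· ≤ ·)]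
    [CovariantClass S S (Function.swap (· * ·)) (· ≤ ·)]
    (hpi : PiRegular S)
    (hrinv : ∀ e f : S, OrdIdem e → OrdIdem f → GreenLStar e f → GreenRStar e f)
    (hlr : ∀ a b : S, GreenLStar a b → GreenRStar a b) :
    ∀ a : S, ∃ (m : ℕ) (t : S), pw a m ≤ pw a (2 * m + 1) * t := by
  intro a
  -- least m with pw a m regular
  have hex := hpi a
  classical
  let m := Nat.find hex
  have hmreg : Regular (pw a m) := Nat.find_spec hex
  have hmleast : LeastReg a m := ⟨hmreg, fun k hk => Nat.find_min hex hk⟩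
  obtain ⟨x, hx⟩ := hmreg
  set b := pw a m with hb
  set f := x * b with hf
  -- f is an ordered idempotent
  have hbf : b ≤ b * f := by
    rw [hf, ← mul_assoc]; exact hx
  have hff : f ≤ f * f := by
    have : x * b ≤ x * (b * f) := mul_le_mul_right hbf x
    rw [← mul_assoc] at this
    exact this
  -- f is regular at index 0
  have hfreg0 : Regular (pw f 0) := ⟨f, (hff.trans (mul_le_mul_left hff f))⟩
  have hfleast : LeastReg f 0 := ⟨hfreg0, fun k hk => absurd hk (Nat.not_lt_zero k)⟩
  -- GreenL b f
  have hL : GreenL b (pw f 0) := by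
    apply greenL_of_mem
    · exact Or.inr ⟨b, hbf⟩
    · exact Or.inr ⟨x, le_refl (x * b)⟩
  -- apply hlr
  have hRstar : GreenRStar a f := hlr a f ⟨m, 0, hmleast, hfleast, hL⟩
  obtain ⟨m', n', hm', hn', hR⟩ := hRstar
  have hmm : m' = m := leastReg_unique hm' hmleast
  have hnn : n' = 0 := leastReg_unique hn' hfleast
  subst hmm; subst hnn
  -- f ∈ Rset b
  have hfmem : f ∈ Rset b := by
    rw [hR]
    exact Or.inl (le_refl f)
  have h2m : pw a (2 * m + 1) = b * b := by
    rw [hb, ← pw_add a m m]; ring_nf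
  rcases hfmem with hle | ⟨s, hle⟩
  · -- f ≤ b : b ≤ b * f ≤ b * b, then b ≤ b*b*b
    have h1 : b ≤ b * b := hbf.trans (mul_le_mul_right hle b)
    refine ⟨m, b, ?_⟩
    rw [h2m]
    calc b ≤ b * b := h1
    _ ≤ b * (b * b) := mul_le_mul_right h1 b
    _ = b * b * b := (mul_assoc _ _ _).symm
  · refine ⟨m, s, ?_⟩
    rw [h2m]
    calc b ≤ b * f := hbf
    _ ≤ b * (b * s) := mul_le_mul_right hle b
    _ = b * b * s := (mul_assoc _ _ _).symm
end

section
/- If an ordered semigroup S is a semilattice Y of left π-t-simple ordered subsemigroups S_α, then S is π-regular and ab L* ba for all a, b ∈ S. -/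
/-!  Common framework: an ordered semigroup is a semigroup with a partial
order compatible with multiplication on both sides.  `pw a n` denotes the
power `a^(n+1)` (so the index `n : ℕ` ranges over the positive exponents). -/

variable {S : Type*}

section Rel
variable [Semigroup S] [PartialOrder S]

/-- regularity within a subset `H`. -/
def RegularIn (H : Set S) (a : S) : Prop := ∃ x ∈ H, a ≤ a * x * a

/-- principal left ideal of `a` within `H`. -/
def LsetIn (H : Set S) (a : S) : Set S := {x ∈ H | x ≤ a ∨ ∃ s ∈ H, x ≤ s * a}

def GreenLIn (H : Set S) (a b : S) : Prop := LsetIn H a = LsetIn H b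

def LeastRegIn (H : Set S) (a : S) (m : ℕ) : Prop :=
  RegularIn H (pw a m) ∧ ∀ k < m, ¬ RegularIn H (pw a k)

/-- the relation `L*` within `H`. -/
def GreenLStarIn (H : Set S) (a b : S) : Prop :=
  ∃ m n : ℕ, LeastRegIn H a m ∧ LeastRegIn H b n ∧ GreenLIn H (pw a m) (pw b n)

end Rel

section AuxLemmas

variable [Semigroup S] [PartialOrder S]

theorem pw_mul_pw (a : S) (i j : ℕ) : pw a i * pw a j = pw a (i + j + 1) := by
  induction j with
  | zero => rfl
  | succ j ih =>
    show pw a i * (pw a j * a) = _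
    rw [← mul_assoc, ih]
    rfl

theorem pw_factor (u E : S) : ∀ j, ∃ W : S, pw (u * E) j = W * E
  | 0 => ⟨u, rfl⟩
  | j + 1 => by
    obtain ⟨W, hW⟩ := pw_factor u E j
    refine ⟨W * E * u, ?_⟩
    show pw (u * E) j * (u * E) = _
    rw [hW]
    simp only [mul_assoc]

theorem pw_mem {Y : Type*} [Semigroup Y] {A : Y → Set S}
    (hmul : ∀ α β : Y, ∀ a ∈ A α, ∀ b ∈ A β, a * b ∈ A (α * β))
    {γ : Y} (hγ : γ * γ = γ) {c : S} (hc : c ∈ A γ) : ∀ k, pw c k ∈ A γ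
  | 0 => hc
  | k + 1 => by
    have h := hmul _ _ _ (pw_mem hmul hγ hc k) _ hc
    rw [hγ] at h
    exact h

variable [CovariantClass S S (· * ·) (· ≤ ·)]
    [CovariantClass S S (Function.swap (· * ·)) (· ≤ ·)]

theorem le_mul_pw {e x : S} (h : e ≤ e * x * e) (k : ℕ) :
    e ≤ e * pw (x * e * x * e) k := by
  have base : e ≤ e * (x * e * x * e) := by
    calc e ≤ e * x * e := h
    _ ≤ e * x * (e * x * e) := mul_le_mul_right h (e * x)
    _ = e * (x * e * x * e) := by simp only [mul_assoc]
  induction k with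
  | zero => exact base
  | succ k ih =>
    calc e ≤ e * (x * e * x * e) := base
    _ ≤ e * pw (x * e * x * e) k * (x * e * x * e) := mul_le_mul_left ih _
    _ = e * pw (x * e * x * e) (k + 1) := by rw [mul_assoc]; rfl

/-- KEY LEMMA: if `e ∈ A γ` is regular in `S` (with witness in some class `δ`),
then `e ≤ s * E` for every `E ∈ A γ`. -/
theorem key_le {Y : Type*} [Semigroup Y]
    (hYcomm : ∀ α β : Y, α * β = β * α) (hYidem : ∀ α : Y, α * α = α)
    (A : Y → Set S)
    (hmul : ∀ α β : Y, ∀ a ∈ A α, ∀ b ∈ A β, a * b ∈ A (α * β))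
    (hlts : ∀ (α : Y), ∀ a ∈ A α, ∀ b ∈ A α, GreenLStarIn (A α) a b)
    {γ δ : Y} {e E x : S} (he : e ∈ A γ) (hE : E ∈ A γ) (hx : x ∈ A δ)
    (hle : e ≤ e * x * e) : ∃ s : S, e ≤ s * E := by
  set u : S := x * e * x with hu
  set ε : Y := δ * γ with hε
  have hεγ : ε * γ = ε := by rw [hε, mul_assoc, hYidem]
  have hγε : γ * ε = ε := by rw [hYcomm γ ε]; exact hεγ
  have huA : u ∈ A ε := by
    have h1 : x * e ∈ A (δ * γ) := hmul _ _ _ hx _ he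
    have h2 : x * e * x ∈ A (δ * γ * δ) := hmul _ _ _ h1 _ hx
    have h3 : δ * γ * δ = ε := by
      rw [hε, mul_assoc, hYcomm γ δ, ← mul_assoc, hYidem]
    rw [h3] at h2
    exact h2
  have hp : u * e ∈ A ε := by
    have h := hmul _ _ _ huA _ he; rw [hεγ] at h; exact h
  have hq : u * E ∈ A ε := by
    have h := hmul _ _ _ huA _ hE; rw [hεγ] at h; exact h
  obtain ⟨k, j, -, -, hGL⟩ := hlts ε (u * e) hp (u * E) hq
  have hGL' : LsetIn (A ε) (pw (u * e) k) = LsetIn (A ε) (pw (u * E) j) := hGL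
  have hεε : ε * ε = ε := hYidem ε
  have hpwk : pw (u * e) k ∈ A ε := pw_mem hmul hεε hp k
  have hσ : e * pw (u * e) k ∈ A ε := by
    have h := hmul _ _ _ he _ hpwk; rw [hγε] at h; exact h
  have hZA : e * pw (u * e) k * pw (u * e) k ∈ A ε := by
    have h := hmul _ _ _ hσ _ hpwk; rw [hεε] at h; exact h
  have hZmem : e * pw (u * e) k * pw (u * e) k ∈ LsetIn (A ε) (pw (u * e) k) :=
    ⟨hZA, Or.inr ⟨e * pw (u * e) k, hσ, le_rfl⟩⟩
  rw [hGL'] at hZmem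
  obtain ⟨-, hZ⟩ := hZmem
  have heZ : e ≤ e * pw (u * e) k * pw (u * e) k := by
    have h1 : e ≤ e * pw (x * e * x * e) (k + k + 1) := le_mul_pw hle _
    have h2 : e * pw (u * e) k * pw (u * e) k = e * pw (u * e) (k + k + 1) := by
      rw [mul_assoc, pw_mul_pw]
    rw [h2]
    exact h1
  obtain ⟨W, hW⟩ := pw_factor u E j
  rcases hZ with h | ⟨s, -, hs⟩
  · exact ⟨W, heZ.trans (h.trans_eq hW)⟩
  · refine ⟨s * W, heZ.trans (hs.trans_eq ?_)⟩
    rw [hW, mul_assoc]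

end AuxLemmas

theorem stmt17 [Semigroup S] [PartialOrder S] [CovariantClass S S (· * ·) (· ≤ ·)]
    [CovariantClass S S (Function.swap (· * ·)) (· ≤ ·)]
    {Y : Type*} [Semigroup Y]
    (hYcomm : ∀ α β : Y, α * β = β * α) (hYidem : ∀ α : Y, α * α = α)
    (A : Y → Set S)
    (hdisj : ∀ α β : Y, α ≠ β → A α ∩ A β = ∅)
    (hcover : ∀ a : S, ∃ α : Y, a ∈ A α)
    (hmul : ∀ α β : Y, ∀ a ∈ A α, ∀ b ∈ A β, a * b ∈ A (α * β))
    (hpi : ∀ (α : Y), ∀ a ∈ A α, ∃ m : ℕ, RegularIn (A α) (pw a m))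
    (hlts : ∀ (α : Y), ∀ a ∈ A α, ∀ b ∈ A α, GreenLStarIn (A α) a b) :
    PiRegular S ∧ ∀ a b : S, GreenLStar (a * b) (b * a) := by
  classical
  have hPi : PiRegular S := by
    intro c
    obtain ⟨α, hc⟩ := hcover c
    obtain ⟨m, x, -, hreg⟩ := hpi α c hc
    exact ⟨m, x, hreg⟩
  refine ⟨hPi, ?_⟩
  intro a b
  obtain ⟨α, ha⟩ := hcover a
  obtain ⟨β, hb⟩ := hcover b
  have hab : a * b ∈ A (α * β) := hmul _ _ _ ha _ hb
  have hba : b * a ∈ A (α * β) := by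
    have h := hmul _ _ _ hb _ ha
    rw [hYcomm β α] at h
    exact h
  have hEc : ∃ k, Regular (pw (a * b) k) := hPi (a * b)
  have hEd : ∃ k, Regular (pw (b * a) k) := hPi (b * a)
  have hregE : Regular (pw (a * b) (Nat.find hEc)) := Nat.find_spec hEc
  have hregF : Regular (pw (b * a) (Nat.find hEd)) := Nat.find_spec hEd
  have he : pw (a * b) (Nat.find hEc) ∈ A (α * β) := pw_mem hmul (hYidem _) hab _
  have hf : pw (b * a) (Nat.find hEd) ∈ A (α * β) := pw_mem hmul (hYidem _) hba _
  obtain ⟨x, hx⟩ := hregE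
  obtain ⟨δ, hxδ⟩ := hcover x
  obtain ⟨s, hs⟩ := key_le hYcomm hYidem A hmul hlts he hf hxδ hx
  obtain ⟨y, hy⟩ := hregF
  obtain ⟨δ', hyδ⟩ := hcover y
  obtain ⟨t, ht⟩ := key_le hYcomm hYidem A hmul hlts hf he hyδ hy
  refine ⟨Nat.find hEc, Nat.find hEd,
    ⟨⟨x, hx⟩, fun k hk => Nat.find_min hEc hk⟩,
    ⟨⟨y, hy⟩, fun k hk => Nat.find_min hEd hk⟩, ?_⟩
  show Lset _ = Lset _
  apply Set.ext
  intro z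
  simp only [Lset, Set.mem_setOf_eq]
  constructor
  · rintro (hz | ⟨w, hw⟩)
    · exact Or.inr ⟨s, hz.trans hs⟩
    · refine Or.inr ⟨w * s, hw.trans ((mul_le_mul_right hs w).trans_eq ?_)⟩
      rw [mul_assoc]
  · rintro (hz | ⟨w, hw⟩)
    · exact Or.inr ⟨t, hz.trans ht⟩
    · refine Or.inr ⟨w * t, hw.trans ((mul_le_mul_right ht w).trans_eq ?_)⟩
      rw [mul_assoc]
end
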